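/- Properties of the lower-level hard instance (Lemma 5, items on ḡ^{sc}): for all integers K ≥ 1 and T ≥ 2, the function ḡ^{sc} : ℝ^T × ℝ^T × ℝ^{K(T−1)} → ℝ is a quadratic function; its gradient (jointly in (x,z,y)) is 5-Lipschitz continuous and all of its derivatives of order at least three vanish; and for every fixed x ∈ ℝ^T, the map (z,y) ↦ ḡ^{sc}(x,z,y) is (1/K²)-strongly convex jointly in (z,y). -/

import Mathlib

noncomputable section
open scoped RealInnerProductSpace

/-- `ℝⁿ` with the Euclidean structure. -/
abbrev EV (n : ℕ) : Type := EuclideanSpace ℝ (Fin n)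

/-- The space `ℝ^{K(T−1)}` of lower-level coupling variables, presented as
`(T−1)` blocks of size `K`; here the sizes are `K+1` and `T+2` so that the paper's
constraints `K ≥ 1`, `T ≥ 2` hold automatically. -/
abbrev EY (K T : ℕ) : Type := EuclideanSpace ℝ (Fin (T + 1) × Fin (K + 1))

/-- The nonconvex regularizer `Υ_r(x) := 120 ∫₁ˣ t²(t−1)/(1+(t/r)²) dt`. -/
def Upsilon (r x : ℝ) : ℝ := 120 * ∫ t in (1 : ℝ)..x, t ^ 2 * (t - 1) / (1 + (t / r) ^ 2)

/-- The tridiagonal path-Laplacian matrix `A_K` (of size `K+1`). -/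
def AK (K : ℕ) : Matrix (Fin (K + 1)) (Fin (K + 1)) ℝ := fun i j =>
  if i = j then (if i.1 = 0 ∨ i.1 = K then 1 else 2)
  else if i.1 + 1 = j.1 ∨ j.1 + 1 = i.1 then -1 else 0

/-- `B = (K^{−2} I + A_K)⁻¹` (size `K+1`). -/
def BK (K : ℕ) : Matrix (Fin (K + 1)) (Fin (K + 1)) ℝ :=
  (((K + 1 : ℝ))⁻¹ ^ 2 • (1 : Matrix (Fin (K + 1)) (Fin (K + 1)) ℝ) + AK K)⁻¹

/-- `a_K = (1/K)(1 − B_{1,1}/B_{1,K})`. -/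
def aK (K : ℕ) : ℝ := (1 / (K + 1 : ℝ)) * (1 - BK K 0 0 / BK K 0 (Fin.last K))

/-- `b_K = K / B_{1,K}`. -/
def bK (K : ℕ) : ℝ := (K + 1 : ℝ) / BK K 0 (Fin.last K)

/-- The upper-level coupling term
`h(z,y) = Σ_{i=1}^{T−1} [(a_K/2)(z_i² + z_{i+1}²) + (b_K/2)(z_i y^{(i)}_1 − z_{i+1} y^{(i)}_K)]`. -/
def hfun (K T : ℕ) (z : EV (T + 2)) (y : EY K T) : ℝ :=
  ∑ i : Fin (T + 1),
    ((aK K / 2) * ((z i.castSucc) ^ 2 + (z i.succ) ^ 2)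
      + (bK K / 2) * (z i.castSucc * y (i, 0) - z i.succ * y (i, Fin.last K)))

/-- The strongly convex sub-chain
`h^{sc}(u,v,w) = ½ Σ_{j<K} (w_j − w_{j+1})² + ‖w‖²/(2K²) − (u w_1 − v w_K)`. -/
def hsc (K : ℕ) (u v : ℝ) (w : EV (K + 1)) : ℝ :=
  (1 / 2) * ∑ j : Fin K, (w j.castSucc - w j.succ) ^ 2
    + (1 / (2 * ((K + 1 : ℝ)) ^ 2)) * ‖w‖ ^ 2 - (u * w 0 - v * w (Fin.last K))

/-- The lower-level hard instance
`ḡ^{sc}(x,z,y) = ‖z‖²/(2K²) − ⟨x,z⟩ + Σ_{i=1}^{T−1} h^{sc}(x_i, x_{i+1}, y^{(i)})`. -/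
def gbar (K T : ℕ) (x z : EV (T + 2)) (y : EY K T) : ℝ :=
  (1 / (2 * ((K + 1 : ℝ)) ^ 2)) * ‖z‖ ^ 2 - ⟪x, z⟫
    + ∑ i : Fin (T + 1), hsc K (x i.castSucc) (x i.succ) (WithLp.toLp 2 (fun j => y (i, j)))

/-- The upper-level hard instance
`f̄^{nc-sc}(x,z,y) = (√ν/2)(z₁/√K − 1)² + ν Σ_{i=1}^{T−1} Υ_r(z_i/√K) + h(z,y)`
(it does not depend on `x`). -/
def fbar (K T : ℕ) (ν r : ℝ) (z : EV (T + 2)) (y : EY K T) : ℝ :=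
  (Real.sqrt ν / 2) * (z 0 / Real.sqrt (K + 1) - 1) ^ 2
    + ν * ∑ i : Fin (T + 1), Upsilon r (z i.castSucc / Real.sqrt (K + 1))
    + hfun K T z y

/-- The joint variable space `ℝ^T × ℝ^T × ℝ^{K(T−1)}`, as one Euclidean space. -/
abbrev EJ (K T : ℕ) : Type :=
  EuclideanSpace ℝ ((Fin (T + 2) ⊕ Fin (T + 2)) ⊕ (Fin (T + 1) × Fin (K + 1)))

/-- The `x`-component of a joint variable. -/
def jx {K T : ℕ} (w : EJ K T) : EV (T + 2) := WithLp.toLp 2 (fun i => w (Sum.inl (Sum.inl i)))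

/-- The `z`-component of a joint variable. -/
def jz {K T : ℕ} (w : EJ K T) : EV (T + 2) := WithLp.toLp 2 (fun i => w (Sum.inl (Sum.inr i)))

/-- The `y`-component of a joint variable. -/
def jy {K T : ℕ} (w : EJ K T) : EY K T := WithLp.toLp 2 (fun p => w (Sum.inr p))

/-- `ḡ^{sc}` as a function of the joint variable `(x,z,y)`. -/
def gbarJ (K T : ℕ) : EJ K T → ℝ := fun w => gbar K T (jx w) (jz w) (jy w)

/-- The joint variable space `ℝ^T × ℝ^{K(T−1)}` of the lower-level variables. -/
abbrev EZY (K T : ℕ) : Type :=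
  EuclideanSpace ℝ (Fin (T + 2) ⊕ (Fin (T + 1) × Fin (K + 1)))

/-- A real-valued function on a normed space is quadratic if it is a polynomial of
degree at most two. -/
def IsQuadratic {V : Type*} [NormedAddCommGroup V] [NormedSpace ℝ V] (f : V → ℝ) : Prop :=
  ∃ (Q : V →L[ℝ] V →L[ℝ] ℝ) (l : V →L[ℝ] ℝ) (c : ℝ), ∀ w, f w = Q w w + l w + c


/-!
`ḡ^{sc}` is the diagonal `w ↦ Q w w` of a continuous bilinear form `Q`, so its derivative at `w`
is `(Q + Qᵀ) w`, its gradient is the symmetric operator representing `Q + Qᵀ`, and all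
derivatives of order at least three vanish. The norm of a symmetric operator is the supremum of
its Rayleigh quotient, so the Lipschitz constant `5` follows from `|ḡ^{sc}(w)| ≤ 5/2 ‖w‖²`, which
is AM–GM on the coupling terms together with `Σ (w_j − w_{j+1})² ≤ 2 Σ (w_j² + w_{j+1}²)` on each
chain. For fixed `x`, subtracting `‖(z,y)‖²/(2K²)` from `ḡ^{sc}` leaves a linear function plus a
sum of squares of linear functionals, which is convex.
-/

open InnerProductSpace

section QuadraticForm

variable {E : Type*} [NormedAddCommGroup E]

def IsQuadraticForm [NormedSpace ℝ E] (f : E → ℝ) : Prop :=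
  ∃ Q : E →L[ℝ] E →L[ℝ] ℝ, ∀ w, f w = Q w w

namespace IsQuadraticForm

variable [NormedSpace ℝ E] {f g : E → ℝ}

theorem mul (ℓ m : E →L[ℝ] ℝ) : IsQuadraticForm fun w => ℓ w * m w :=
  ⟨ℓ.smulRight m, fun w => by simp⟩

theorem sq (ℓ : E →L[ℝ] ℝ) : IsQuadraticForm fun w => ℓ w ^ 2 := by
  simpa only [pow_two] using mul ℓ ℓ

theorem add (hf : IsQuadraticForm f) (hg : IsQuadraticForm g) :
    IsQuadraticForm fun w => f w + g w := by
  obtain ⟨P, hP⟩ := hf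
  obtain ⟨Q, hQ⟩ := hg
  exact ⟨P + Q, fun w => by simp [hP, hQ]⟩

theorem sub (hf : IsQuadraticForm f) (hg : IsQuadraticForm g) :
    IsQuadraticForm fun w => f w - g w := by
  obtain ⟨P, hP⟩ := hf
  obtain ⟨Q, hQ⟩ := hg
  exact ⟨P - Q, fun w => by simp [hP, hQ]⟩

theorem const_mul (hf : IsQuadraticForm f) (c : ℝ) : IsQuadraticForm fun w => c * f w := by
  obtain ⟨Q, hQ⟩ := hf
  exact ⟨c • Q, fun w => by simp [hQ]⟩

theorem sum {ι : Type*} (s : Finset ι) {f : ι → E → ℝ} (hf : ∀ i ∈ s, IsQuadraticForm (f i)) :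
    IsQuadraticForm fun w => ∑ i ∈ s, f i w := by
  classical
  induction s using Finset.induction_on with
  | empty => exact ⟨0, fun w => by simp⟩
  | insert i s hi ih =>
    simp only [Finset.sum_insert hi]
    exact (hf i (s.mem_insert_self i)).add (ih fun j hj => hf j (Finset.mem_insert_of_mem hj))

end IsQuadraticForm

section Derivatives

variable {𝕜 : Type*} [NontriviallyNormedField 𝕜] {F : Type*} [NormedAddCommGroup F]
  [NormedSpace 𝕜 F] (Q : F →L[𝕜] F →L[𝕜] 𝕜)

theorem ContinuousLinearMap.hasFDerivAt_apply_self (w : F) :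
    HasFDerivAt (fun v => Q v v) ((Q + Q.flip) w) w := by
  refine (Q.hasFDerivAt_of_bilinear (hasFDerivAt_id w) (hasFDerivAt_id w)).congr_fderiv ?_
  ext v
  simp

theorem ContinuousLinearMap.iteratedFDeriv_apply_self_eq_zero {n : ℕ} (hn : 3 ≤ n) :
    iteratedFDeriv 𝕜 n (fun v => Q v v) = 0 := by
  obtain ⟨m, rfl⟩ : ∃ m, n = m + 1 + 1 + 1 := ⟨n - 3, by omega⟩
  have hD : fderiv 𝕜 (fun v => Q v v) = ⇑(Q + Q.flip) :=
    funext fun w => (Q.hasFDerivAt_apply_self w).fderiv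
  have hD2 : fderiv 𝕜 (⇑(Q + Q.flip)) = fun _ => Q + Q.flip :=
    funext fun _ => (Q + Q.flip).fderiv
  funext x
  rw [Pi.zero_apply, ← norm_eq_zero, ← norm_iteratedFDeriv_fderiv, hD,
    ← norm_iteratedFDeriv_fderiv, hD2, iteratedFDeriv_const_of_ne m.succ_ne_zero, Pi.zero_apply,
    norm_zero]

end Derivatives

section Gradient

variable [InnerProductSpace ℝ E] [CompleteSpace E] (Q : E →L[ℝ] E →L[ℝ] ℝ)

theorem ContinuousLinearMap.gradient_apply_self (w : E) :
    gradient (fun v => Q v v) w = continuousLinearMapOfBilin (𝕜 := ℝ) (Q + Q.flip) w :=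
  (Q.hasFDerivAt_apply_self w).hasGradientAt.gradient

theorem ContinuousLinearMap.isSymmetric_continuousLinearMapOfBilin_add_flip :
    (continuousLinearMapOfBilin (𝕜 := ℝ) (Q + Q.flip) : E →ₗ[ℝ] E).IsSymmetric := fun u v => by
  rw [ContinuousLinearMap.coe_coe, real_inner_comm _ u, continuousLinearMapOfBilin_apply,
    continuousLinearMapOfBilin_apply]
  simpa using add_comm _ _

theorem ContinuousLinearMap.norm_continuousLinearMapOfBilin_add_flip_le {c : ℝ} (hc : 0 ≤ c)
    (hQ : ∀ w, |Q w w| ≤ c * ‖w‖ ^ 2) :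
    ‖continuousLinearMapOfBilin (𝕜 := ℝ) (Q + Q.flip)‖ ≤ 2 * c := by
  rw [ContinuousLinearMap.norm_eq_iSup_rayleighQuotient _
    Q.isSymmetric_continuousLinearMapOfBilin_add_flip]
  refine ciSup_le fun w => ?_
  rcases eq_or_ne w 0 with rfl | hw
  · simpa using hc
  have hw : 0 < ‖w‖ ^ 2 := by positivity
  rw [ContinuousLinearMap.rayleighQuotient, ContinuousLinearMap.reApplyInnerSelf_apply,
    RCLike.re_to_real, continuousLinearMapOfBilin_apply, abs_div, abs_of_pos hw, div_le_iff₀ hw]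
  simpa [← two_mul, abs_mul, mul_assoc] using mul_le_mul_of_nonneg_left (hQ w) zero_le_two

theorem ContinuousLinearMap.norm_gradient_apply_self_sub_le {c : ℝ} (hc : 0 ≤ c)
    (hQ : ∀ w, |Q w w| ≤ c * ‖w‖ ^ 2) (w₁ w₂ : E) :
    ‖gradient (fun v => Q v v) w₁ - gradient (fun v => Q v v) w₂‖ ≤ 2 * c * ‖w₁ - w₂‖ := by
  rw [Q.gradient_apply_self, Q.gradient_apply_self, ← map_sub]
  exact (ContinuousLinearMap.le_opNorm _ _).trans
    (mul_le_mul_of_nonneg_right (Q.norm_continuousLinearMapOfBilin_add_flip_le hc hQ)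
      (norm_nonneg _))

end Gradient

end QuadraticForm

section Convexity

variable {𝕜 E β ι : Type*} [Semiring 𝕜] [PartialOrder 𝕜] [AddCommMonoid E] [SMul 𝕜 E]
  [AddCommMonoid β] [PartialOrder β] [IsOrderedAddMonoid β] [Module 𝕜 β]

theorem ConvexOn.fun_sum {s : Set E} (hs : Convex 𝕜 s) (t : Finset ι) {f : ι → E → β}
    (hf : ∀ i ∈ t, ConvexOn 𝕜 s (f i)) : ConvexOn 𝕜 s fun x => ∑ i ∈ t, f i x := by
  classical
  induction t using Finset.induction_on with
  | empty => simpa using convexOn_const (0 : β) hs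
  | insert i t hi ih =>
    simp only [Finset.sum_insert hi]
    exact (hf i (t.mem_insert_self i)).add (ih fun j hj => hf j (Finset.mem_insert_of_mem hj))

end Convexity

theorem LinearMap.convexOn_sq {E : Type*} [AddCommGroup E] [Module ℝ E] (ℓ : E →ₗ[ℝ] ℝ) :
    ConvexOn ℝ Set.univ fun v => ℓ v ^ 2 := by
  have h := (even_two.convexOn_pow (𝕜 := ℝ)).comp_linearMap ℓ
  rwa [Set.preimage_univ] at h

theorem Fin.sum_sq_sub_succ_add_le {K : ℕ} (c : Fin (K + 1) → ℝ) :
    ∑ j : Fin K, (c j.castSucc - c j.succ) ^ 2 + 2 * c 0 ^ 2 + 2 * c (Fin.last K) ^ 2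
      ≤ 4 * ∑ j, c j ^ 2 := by
  have hpair : ∑ j : Fin K, (c j.castSucc - c j.succ) ^ 2
      ≤ 2 * ∑ j : Fin K, c j.castSucc ^ 2 + 2 * ∑ j : Fin K, c j.succ ^ 2 := by
    rw [Finset.mul_sum, Finset.mul_sum, ← Finset.sum_add_distrib]
    exact Finset.sum_le_sum fun j _ => by nlinarith [sq_nonneg (c j.castSucc + c j.succ)]
  have hinit := Fin.sum_univ_castSucc fun j => c j ^ 2
  have htail := Fin.sum_univ_succ fun j => c j ^ 2
  linarith

theorem two_mul_abs_mul_le (a b : ℝ) : 2 * |a * b| ≤ a ^ 2 + b ^ 2 := by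
  simpa only [abs_mul, mul_assoc, sq_abs] using two_mul_le_add_sq |a| |b|

section HardInstance

variable (K T : ℕ)

theorem one_div_two_mul_succ_sq_le : 1 / (2 * ((K + 1 : ℝ)) ^ 2) ≤ 1 / 2 := by
  gcongr
  nlinarith [(K.cast_nonneg : (0 : ℝ) ≤ K)]

theorem abs_hsc_le (u v : ℝ) (w : EV (K + 1)) :
    |hsc K u v w| ≤ 5 / 2 * ‖w‖ ^ 2 + u ^ 2 / 2 + v ^ 2 / 2 := by
  have hchain := Fin.sum_sq_sub_succ_add_le (K := K) w
  rw [← EuclideanSpace.real_norm_sq_eq] at hchain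
  have hdiff : 0 ≤ ∑ j : Fin K, (w j.castSucc - w j.succ) ^ 2 := by positivity
  have hreg : 0 ≤ 1 / (2 * ((K + 1 : ℝ)) ^ 2) * ‖w‖ ^ 2 := by positivity
  have hreg' := mul_le_mul_of_nonneg_right (one_div_two_mul_succ_sq_le K) (sq_nonneg ‖w‖)
  have hu := two_mul_abs_mul_le u (w 0)
  have hv := two_mul_abs_mul_le v (w (Fin.last K))
  have hcross := abs_le.mp (abs_sub (u * w 0) (v * w (Fin.last K)))
  rw [hsc, abs_le]
  constructor <;> linarith [hcross.1, hcross.2, sq_nonneg (w 0), sq_nonneg (w (Fin.last K))]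

theorem abs_gbar_le (x z : EV (T + 2)) (y : EY K T) :
    |gbar K T x z y| ≤ 5 / 2 * (‖x‖ ^ 2 + ‖z‖ ^ 2 + ‖y‖ ^ 2) := by
  set yb : Fin (T + 1) → EV (K + 1) := fun i => WithLp.toLp 2 fun j => y (i, j)
  have hy : ‖y‖ ^ 2 = ∑ i, ‖yb i‖ ^ 2 := by
    simp only [yb, EuclideanSpace.real_norm_sq_eq, Fintype.sum_prod_type]
  have hinit : ∑ i : Fin (T + 1), x i.castSucc ^ 2 ≤ ‖x‖ ^ 2 := by
    rw [EuclideanSpace.real_norm_sq_eq, Fin.sum_univ_castSucc (fun i => x i ^ 2)]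
    linarith [sq_nonneg (x (Fin.last (T + 1)))]
  have htail : ∑ i : Fin (T + 1), x i.succ ^ 2 ≤ ‖x‖ ^ 2 := by
    rw [EuclideanSpace.real_norm_sq_eq, Fin.sum_univ_succ (fun i => x i ^ 2)]
    linarith [sq_nonneg (x 0)]
  have hblocks : |∑ i, hsc K (x i.castSucc) (x i.succ) (yb i)|
      ≤ 5 / 2 * ‖y‖ ^ 2 + ‖x‖ ^ 2 := by
    calc |∑ i, hsc K (x i.castSucc) (x i.succ) (yb i)|
        ≤ ∑ i, (5 / 2 * ‖yb i‖ ^ 2 + x i.castSucc ^ 2 / 2 + x i.succ ^ 2 / 2) :=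
          (Finset.abs_sum_le_sum_abs _ _).trans
            (Finset.sum_le_sum fun i _ => abs_hsc_le K _ _ (yb i))
      _ = 5 / 2 * ‖y‖ ^ 2 + (∑ i : Fin (T + 1), x i.castSucc ^ 2) / 2
            + (∑ i : Fin (T + 1), x i.succ ^ 2) / 2 := by
          rw [hy, Finset.sum_add_distrib, Finset.sum_add_distrib, Finset.mul_sum,
            Finset.sum_div, Finset.sum_div]
      _ ≤ 5 / 2 * ‖y‖ ^ 2 + ‖x‖ ^ 2 := by linarith
  have hinner : |⟪x, z⟫| ≤ (‖x‖ ^ 2 + ‖z‖ ^ 2) / 2 :=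
    (abs_real_inner_le_norm x z).trans (by linarith [two_mul_le_add_sq ‖x‖ ‖z‖])
  have hreg : 0 ≤ 1 / (2 * ((K + 1 : ℝ)) ^ 2) * ‖z‖ ^ 2 := by positivity
  have hreg' := mul_le_mul_of_nonneg_right (one_div_two_mul_succ_sq_le K) (sq_nonneg ‖z‖)
  rw [gbar, abs_le]
  constructor <;> linarith [abs_le.mp hblocks, abs_le.mp hinner]

theorem abs_gbarJ_le (w : EJ K T) : |gbarJ K T w| ≤ 5 / 2 * ‖w‖ ^ 2 := by
  have hw : ‖w‖ ^ 2 = ‖jx w‖ ^ 2 + ‖jz w‖ ^ 2 + ‖jy w‖ ^ 2 := by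
    simp only [jx, jz, jy, EuclideanSpace.real_norm_sq_eq, Fintype.sum_sum_type]
  rw [hw]
  exact abs_gbar_le K T _ _ _

theorem isQuadraticForm_gbarJ : IsQuadraticForm (gbarJ K T) := by
  let p : _ → EJ K T →L[ℝ] ℝ := EuclideanSpace.proj
  have hg : gbarJ K T = fun w =>
      1 / (2 * ((K + 1 : ℝ)) ^ 2) * ∑ i, p (.inl (.inr i)) w ^ 2
        - ∑ i, p (.inl (.inl i)) w * p (.inl (.inr i)) w
        + ∑ i : Fin (T + 1),
          (1 / 2 * ∑ j : Fin K, (p (.inr (i, j.castSucc)) - p (.inr (i, j.succ))) w ^ 2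
            + 1 / (2 * ((K + 1 : ℝ)) ^ 2) * ∑ j, p (.inr (i, j)) w ^ 2
            - (p (.inl (.inl i.castSucc)) w * p (.inr (i, 0)) w
              - p (.inl (.inl i.succ)) w * p (.inr (i, Fin.last K)) w)) := by
    funext w
    simp [gbarJ, gbar, hsc, jx, jz, jy, p, EuclideanSpace.real_norm_sq_eq, PiLp.inner_apply,
      mul_comm]
  rw [hg]
  exact (((IsQuadraticForm.sum _ fun _ _ => .sq _).const_mul _).sub
    (.sum _ fun _ _ => .mul _ _)).add (.sum _ fun _ _ =>
      (((IsQuadraticForm.sum _ fun _ _ => .sq _).const_mul _).add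
        ((IsQuadraticForm.sum _ fun _ _ => .sq _).const_mul _)).sub
      ((IsQuadraticForm.mul _ _).sub (.mul _ _)))

theorem strongConvexOn_gbar (x : EV (T + 2)) :
    StrongConvexOn Set.univ (1 / ((K + 1 : ℝ)) ^ 2)
      (fun v : EZY K T =>
        gbar K T x (WithLp.toLp 2 (fun i => v (Sum.inl i)))
          (WithLp.toLp 2 (fun p => v (Sum.inr p)))) := by
  let p : _ → EZY K T →L[ℝ] ℝ := EuclideanSpace.proj
  let ℓ : EZY K T →L[ℝ] ℝ := -∑ i, x i • p (.inl i)
    - ∑ i : Fin (T + 1),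
        (x i.castSucc • p (.inr (i, 0)) - x i.succ • p (.inr (i, Fin.last K)))
  have hg : (fun v : EZY K T =>
      gbar K T x (WithLp.toLp 2 (fun i => v (Sum.inl i))) (WithLp.toLp 2 (fun p => v (Sum.inr p)))
        - 1 / ((K + 1 : ℝ)) ^ 2 / 2 * ‖v‖ ^ 2)
      = fun v => ℓ v + ∑ i : Fin (T + 1), ∑ j : Fin K,
          1 / 2 * ((p (.inr (i, j.castSucc)) - p (.inr (i, j.succ))) v) ^ 2 := by
    funext v
    simp only [gbar, hsc, ℓ, p, EuclideanSpace.real_norm_sq_eq, PiLp.inner_apply,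
      RCLike.inner_apply, Real.ringHom_apply, one_div, mul_inv_rev, mul_comm,
      Finset.sum_sub_distrib, Finset.sum_add_distrib, ← Finset.mul_sum, Fintype.sum_sum_type, Fintype.sum_prod_type,
      sub_apply, neg_apply, sum_apply, smul_apply, PiLp.proj_apply, smul_eq_mul]
    ring
  rw [strongConvexOn_iff_convex, hg]
  exact (ℓ : EZY K T →ₗ[ℝ] ℝ).convexOn convex_univ |>.add <|
    .fun_sum convex_univ _ fun i _ => .fun_sum convex_univ _ fun j _ =>
      (LinearMap.convexOn_sq _).smul (by norm_num : (0 : ℝ) ≤ 1 / 2)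

end HardInstance

theorem lower_level_hard_instance_properties (K' T' : ℕ) :
    IsQuadratic (gbarJ K' T') ∧
    (∀ w₁ w₂ : EJ K' T',
      ‖gradient (gbarJ K' T') w₁ - gradient (gbarJ K' T') w₂‖ ≤ 5 * ‖w₁ - w₂‖) ∧
    (∀ n : ℕ, 3 ≤ n → iteratedFDeriv ℝ n (gbarJ K' T') = 0) ∧
    (∀ x : EV (T' + 2),
      StrongConvexOn Set.univ (1 / ((K' + 1 : ℝ)) ^ 2)
        (fun v : EZY K' T' =>
          gbar K' T' x (WithLp.toLp 2 (fun i => v (Sum.inl i))) (WithLp.toLp 2 (fun p => v (Sum.inr p))))) := by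
  obtain ⟨Q, hQ⟩ := isQuadraticForm_gbarJ K' T'
  have hg : gbarJ K' T' = fun w => Q w w := funext hQ
  have hbound (w : EJ K' T') : |Q w w| ≤ 5 / 2 * ‖w‖ ^ 2 := hQ w ▸ abs_gbarJ_le K' T' w
  refine ⟨⟨Q, 0, 0, by simpa using hQ⟩, fun w₁ w₂ => ?_,
    fun n hn => hg ▸ Q.iteratedFDeriv_apply_self_eq_zero hn, strongConvexOn_gbar K' T'⟩
  rw [hg]
  linarith [Q.norm_gradient_apply_self_sub_le (by norm_num) hbound w₁ w₂]
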